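/- arXiv:1702.03607 — 7 statements merged into one kernel-verified Lean document; each statement's English description precedes it below -/
import Mathlib

section
/- For all n ≥ 0, h_{2n+2}² - (3h_{2n+2} - h_{2n+3}) = h_{2n+1}·(h_{2n+3} - 1) + 1, where h is the even-index Fibonacci sequence. -/
theorem evenFib_identity (h : ℕ → ℤ) (h0 : h 0 = 1) (h1 : h 1 = 3)
    (hrec : ∀ n, h (n + 2) = 3 * h (n + 1) - h n) :
    ∀ n, h (2 * n + 2) ^ 2 - (3 * h (2 * n + 2) - h (2 * n + 3)) =
      h (2 * n + 1) * (h (2 * n + 3) - 1) + 1 := by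
  have key : ∀ k, h (k + 1) ^ 2 - 3 * h k * h (k + 1) + h k ^ 2 = 1 := by
    intro k
    induction k with
    | zero => rw [h0, h1]; ring
    | succ m ih => rw [hrec m]; nlinarith [ih]
  intro n
  have hr1 := hrec (2 * n + 1)
  have hk := key (2 * n + 1)
  have : 2 * n + 1 + 2 = 2 * n + 3 := by ring
  rw [this, show 2*n+1+1 = 2*n+2 from rfl] at hr1
  rw [show 2*n+1+1 = 2*n+2 from rfl] at hk
  rw [hr1]; linear_combination hk
end

section
/- For all n ≥ 0, Q_{n+1}·ℓ_n = Q_n·ℓ_{n+1} + 1, where Q_n = h_{2n+1} and ℓ_n = h_{2n+2}/3 (both integer sequences satisfying the recursion a_{n+2} = 7a_{n+1} - a_n with Q_0 = 1, Q_1 = 8 and ℓ_0 = 1, ℓ_1 = 7). -/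
theorem Q_ell_identity (Q l : ℕ → ℤ)
    (hQ0 : Q 0 = 1) (hQ1 : Q 1 = 8) (hQrec : ∀ n, Q (n + 2) = 7 * Q (n + 1) - Q n)
    (hl0 : l 0 = 1) (hl1 : l 1 = 7) (hlrec : ∀ n, l (n + 2) = 7 * l (n + 1) - l n) :
    ∀ n, Q (n + 1) * l n = Q n * l (n + 1) + 1 := by
  intro n
  induction n with
  | zero => rw [hQ0, hQ1, hl0, hl1]; ring
  | succ k ih => rw [hQrec k, hlrec k]; linarith [ih]
end

section
/- If S : ℕ → ℤ is a strictly increasing sequence of positive integers satisfying S_{n+2} = 7S_{n+1} - S_n with τ⁴ < S_1/S_0 < 7 (where τ = (1+√5)/2, so τ⁴ = (7+3√5)/2), then the sequence S_{n+1}/S_n is strictly decreasing and converges to τ⁴. -/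
theorem ratio_decreasing_to_tau4 (S : ℕ → ℤ)
    (hpos : ∀ n, 0 < S n) (hmono : StrictMono S)
    (hrec : ∀ n, S (n + 2) = 7 * S (n + 1) - S n)
    (hlow : (7 + 3 * Real.sqrt 5) / 2 < (S 1 : ℝ) / (S 0 : ℝ))
    (hhigh : (S 1 : ℝ) / (S 0 : ℝ) < 7) :
    StrictAnti (fun n => (S (n + 1) : ℝ) / (S n : ℝ)) ∧
      Filter.Tendsto (fun n => (S (n + 1) : ℝ) / (S n : ℝ)) Filter.atTop
        (nhds ((7 + 3 * Real.sqrt 5) / 2)) := by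
  set a : ℝ := (7 + 3 * Real.sqrt 5) / 2 with ha
  have h5 : Real.sqrt 5 ^ 2 = 5 := Real.sq_sqrt (by norm_num)
  have h5pos : (0:ℝ) < Real.sqrt 5 := Real.sqrt_pos.mpr (by norm_num)
  have h5gt : 2 < Real.sqrt 5 := by nlinarith
  have haq : a * a = 7 * a - 1 := by rw [ha]; nlinarith
  have hapos : (0:ℝ) < a := by rw [ha]; positivity
  set r : ℕ → ℝ := fun n => (S (n + 1) : ℝ) / (S n : ℝ) with hr
  have hSpos : ∀ n, (0:ℝ) < (S n : ℝ) := fun n => by exact_mod_cast hpos n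
  have hstep : ∀ n, r (n + 1) = 7 - 1 / r n := by
    intro n
    have hrec' : (S (n + 2) : ℝ) = 7 * (S (n + 1) : ℝ) - (S n : ℝ) := by
      exact_mod_cast hrec n
    have h1 := (hSpos (n + 1)).ne'
    have h0 := (hSpos n).ne'
    simp only [hr]
    rw [one_div_div]
    field_simp
    linarith [hrec']
  have key : ∀ n, a < r n := by
    intro n; induction n with
    | zero => exact hlow
    | succ n ih =>
      have hrn : 0 < r n := lt_trans hapos ih
      rw [hstep n]
      have h1 : 1 / r n < 1 / a := one_div_lt_one_div_of_lt hapos ih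
      have ha' : a = 7 - 1 / a := by field_simp; linarith [haq]
      linarith
  have hdec : ∀ n, r (n + 1) < r n := by
    intro n
    have hrn : 0 < r n := lt_trans hapos (key n)
    rw [hstep n]
    have h1 : r n * r n - 7 * r n + 1 > 0 := by nlinarith [key n, haq]
    have hinv : 1 / r n * r n = 1 := one_div_mul_cancel hrn.ne'
    nlinarith [hinv]
  have hanti : StrictAnti r := strictAnti_nat_of_succ_lt hdec
  have hbdd : BddBelow (Set.range r) := ⟨a, by rintro x ⟨n, rfl⟩; exact (key n).le⟩
  have htend : Filter.Tendsto r Filter.atTop (nhds (⨅ n, r n)) :=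
    tendsto_atTop_ciInf hanti.antitone hbdd
  set L := ⨅ n, r n with hL
  have hLa : a ≤ L := le_ciInf fun n => (key n).le
  have hLpos : 0 < L := lt_of_lt_of_le hapos hLa
  have htend2 : Filter.Tendsto (fun n => r (n + 1)) Filter.atTop (nhds L) :=
    htend.comp (Filter.tendsto_add_atTop_nat 1)
  have htend3 : Filter.Tendsto (fun n => 7 - 1 / r n) Filter.atTop (nhds (7 - 1 / L)) :=
    Filter.Tendsto.sub tendsto_const_nhds (Filter.Tendsto.div tendsto_const_nhds htend hLpos.ne')
  have heq : L = 7 - 1 / L := by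
    refine tendsto_nhds_unique htend2 ?_
    simpa only [hstep] using htend3
  have hLeq : L * L = 7 * L - 1 := by
    field_simp at heq; nlinarith [heq]
  have hLa' : L = a := by nlinarith [hLa, haq, hLeq, h5gt]
  exact ⟨hanti, hLa' ▸ htend⟩
end

section
/- For all n ≥ 1, the continued fraction [6; (1,5)^{×(n-1)}, 1, 7] equals Q_{n+1}/Q_n, where Q_0 = 1, Q_1 = 8, Q_{n+2} = 7Q_{n+1} - Q_n. (Here (1,5)^{×(n-1)} denotes the block 1,5 repeated n-1 times.) -/
/-!
Write `r_m` for the value of `[6; (1,5)^m, 1, 7]`. Inserting the block `1, 5` after the leading `6`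
turns a value `r` into `7 - 1/r`, so `r_{m+1} = 7 - 1/r_m`. By the recurrence for `Q` (whose terms
are positive and increasing, so the natural subtraction is honest), the ratios `Q_{m+2}/Q_{m+1}`
obey the same recursion, and both start at `55/8`.
-/

/-- The value of a finite continued fraction `[a_0; a_1, ..., a_k]`. -/
def cfVal : List ℕ → ℚ
  | [] => 0
  | [a] => (a : ℚ)
  | a :: b :: l => (a : ℚ) + (cfVal (b :: l))⁻¹

lemma cfVal_cons (a : ℕ) {l : List ℕ} (hl : l ≠ []) :
    cfVal (a :: l) = a + (cfVal l)⁻¹ := by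
  cases l with
  | nil => contradiction
  | cons b t => rfl

lemma cfVal_nonneg : ∀ l : List ℕ, 0 ≤ cfVal l
  | [] => le_rfl
  | [a] => Nat.cast_nonneg a
  | a :: b :: l => add_nonneg (Nat.cast_nonneg a) (inv_nonneg.mpr (cfVal_nonneg (b :: l)))

lemma cfVal_cons_one_cons {a b : ℕ} (hab : a = b + 1) (hb : 0 < b) {l : List ℕ} (hl : l ≠ []) :
    cfVal (a :: 1 :: b :: l) = a + 1 - (cfVal (a :: l))⁻¹ := by
  rw [cfVal_cons a (List.cons_ne_nil _ _), cfVal_cons 1 (List.cons_ne_nil _ _), cfVal_cons b hl,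
    cfVal_cons a hl, hab]
  have hy : (0 : ℚ) < b + (cfVal l)⁻¹ :=
    add_pos_of_pos_of_nonneg (Nat.cast_pos.mpr hb) (inv_nonneg.mpr (cfVal_nonneg l))
  set y : ℚ := b + (cfVal l)⁻¹
  have hy1 : ((b + 1 : ℕ) : ℚ) + (cfVal l)⁻¹ = y + 1 := by push_cast; ring
  rw [hy1]
  field_simp
  ring

lemma lt_succ_of_rec {Q : ℕ → ℕ} {c : ℕ} (hc : 2 ≤ c) (h01 : Q 0 < Q 1)
    (hrec : ∀ n, Q (n + 2) = c * Q (n + 1) - Q n) : ∀ n, Q n < Q (n + 1)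
  | 0 => h01
  | n + 1 => by
    have ih := lt_succ_of_rec hc h01 hrec n
    have : 2 * Q (n + 1) ≤ c * Q (n + 1) := Nat.mul_le_mul_right _ hc
    rw [hrec n]
    omega

theorem cfVal_six_replicate (Q : ℕ → ℕ)
    (hQ0 : Q 0 = 1) (hQ1 : Q 1 = 8) (hQrec : ∀ n, Q (n + 2) = 7 * Q (n + 1) - Q n) (m : ℕ) :
    cfVal (6 :: ((List.replicate m ([1, 5] : List ℕ)).flatten ++ [1, 7])) =
      (Q (m + 2) : ℚ) / (Q (m + 1) : ℚ) := by
  have hQ_lt : ∀ n, Q n < Q (n + 1) := lt_succ_of_rec (by norm_num) (by omega) hQrec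
  induction m with
  | zero =>
    rw [hQrec 0, hQ1, hQ0]
    norm_num [cfVal]
  | succ m ih =>
    have hpos : (0 : ℚ) < Q (m + 2) := by
      exact_mod_cast (Nat.zero_le _).trans_lt (hQ_lt (m + 1))
    have hrec : (Q (m + 3) : ℚ) = 7 * Q (m + 2) - Q (m + 1) := by
      rw [hQrec (m + 1), Nat.cast_sub (by have := hQ_lt (m + 1); omega)]
      push_cast
      ring
    simp only [List.replicate_succ, List.flatten_cons, List.cons_append, List.nil_append]
    rw [cfVal_cons_one_cons rfl (by norm_num) (by simp), ih, hrec]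
    field_simp
    push_cast
    ring

theorem continued_fraction_Q (Q : ℕ → ℕ)
    (hQ0 : Q 0 = 1) (hQ1 : Q 1 = 8) (hQrec : ∀ n, Q (n + 2) = 7 * Q (n + 1) - Q n) :
    ∀ n, 1 ≤ n →
      cfVal (6 :: ((List.replicate (n - 1) ([1, 5] : List ℕ)).flatten ++ [1, 7])) =
        (Q (n + 1) : ℚ) / (Q n : ℚ) := by
  rintro n hn
  obtain ⟨m, rfl⟩ : ∃ m, n = m + 1 := ⟨n - 1, by omega⟩
  exact cfVal_six_replicate Q hQ0 hQ1 hQrec m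
end

section
/- For all n ≥ 1, the dot product z_M(n) · W(b_n) equals ℓ_{n-1}·Q_n + t_n·Q_{n+1} - 1, where W(b_n) is the normalized weight sequence of b_n = Q_{n+1}/Q_n, and z_M(n) is the vector obtained from 6·W(ℓ_n/ℓ_{n-1}) by appending seven entries equal to 1. -/
/-- The normalized weight sequence of `p/q`, defined by the subtractive
Euclidean recursion `W(p,q) = q^{×⌊p/q⌋} ++ W(q, p mod q)`, `W(p,0) = []`. -/
def weightSeq : ℕ → ℕ → List ℕ
  | _, 0 => []
  | p, (q + 1) => List.replicate (p / (q + 1)) (q + 1) ++ weightSeq (q + 1) (p % (q + 1))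
termination_by p q => q
decreasing_by exact Nat.lt_of_lt_of_le (Nat.mod_lt _ (Nat.succ_pos q)) (le_refl _)

/-- `Q_0 = 1, Q_1 = 8, Q_{n+2} = 7Q_{n+1} - Q_n`. -/
def Qseq : ℕ → ℕ
  | 0 => 1
  | 1 => 8
  | (n + 2) => 7 * Qseq (n + 1) - Qseq n

/-- `ℓ_0 = 1, ℓ_1 = 7, ℓ_{n+2} = 7ℓ_{n+1} - ℓ_n`. -/
def ellSeq : ℕ → ℕ
  | 0 => 1
  | 1 => 7
  | (n + 2) => 7 * ellSeq (n + 1) - ellSeq n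

/-- `z_M(n)`: the vector `6·W(ℓ_n/ℓ_{n-1})` with seven `1`s appended. -/
def zM (n : ℕ) : List ℕ :=
  ((weightSeq (ellSeq n) (ellSeq (n - 1))).map (fun x => 6 * x)) ++ List.replicate 7 1

/-! Both `Qseq` and `ellSeq` solve `x (n + 2) = 7 x (n + 1) - x n` with `0 < x n < x (n + 1)`.
Hence `x (n + 2) = 6 x (n + 1) + (x (n + 1) - x n)` and
`x (n + 2) - x (n + 1) = 5 x (n + 1) + (x (n + 1) - x n)`, so the weight sequences consist of
blocks `x (n + 1)^{×6}, t, x n^{×5}, t, x (n - 1)^{×5}, …` (`t` a consecutive difference) that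
line up exactly for the two sequences. After the leading block of six, the dot product grows by
`6 t^ℓ t^Q + 30 ℓ Q` per step, which matches the growth of the closed form; an induction
from the explicitly computed bottom of the Euclidean chain finishes the proof. -/

theorem weightSeq_eq_replicate_append {p q a r : ℕ} (h : p = a * q + r) (hr : r < q) :
    weightSeq p q = List.replicate a q ++ weightSeq q r := by
  have hq : 0 < q := by omega
  have hdiv : p / q = a := by
    rw [h, Nat.add_comm, Nat.add_mul_div_right _ _ hq, Nat.div_eq_of_lt hr, Nat.zero_add]
  have hmod : p % q = r := by rw [h, Nat.mul_comm, Nat.mul_add_mod, Nat.mod_eq_of_lt hr]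
  obtain ⟨q, rfl⟩ : ∃ q', q = q' + 1 := ⟨q - 1, by omega⟩
  rw [weightSeq, hdiv, hmod]

theorem weightSeq_one (q : ℕ) : weightSeq q 1 = List.replicate q 1 := by
  rw [weightSeq_eq_replicate_append (a := q) (r := 0) (by ring) one_pos, weightSeq,
    List.append_nil]

theorem weightSeq_succ_self {q : ℕ} (hq : 1 < q) :
    weightSeq (q + 1) q = q :: List.replicate q 1 := by
  rw [weightSeq_eq_replicate_append (a := 1) (r := 1) (by ring) hq, weightSeq_one]
  rfl

def listDot (u v : List ℕ) : ℕ := (List.zipWith (· * ·) u v).sum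

@[simp]
theorem listDot_cons (a b : ℕ) (u v : List ℕ) :
    listDot (a :: u) (b :: v) = a * b + listDot u v := by
  simp [listDot]

theorem listDot_append {u u' : List ℕ} (v v' : List ℕ) (h : u.length = u'.length) :
    listDot (u ++ v) (u' ++ v') = listDot u u' + listDot v v' := by
  rw [listDot, List.zipWith_append h, List.sum_append]
  rfl

theorem listDot_replicate (k a b : ℕ) :
    listDot (List.replicate k a) (List.replicate k b) = k * (a * b) := by
  simp [listDot, List.sum_replicate]

structure IsSevenRecurrent (x : ℕ → ℕ) : Prop where
  zero_pos : 0 < x 0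
  zero_lt_one : x 0 < x 1
  recurrence : ∀ n, x (n + 2) = 7 * x (n + 1) - x n

theorem isSevenRecurrent_Qseq : IsSevenRecurrent Qseq :=
  ⟨by decide, by decide, fun _ => rfl⟩

theorem isSevenRecurrent_ellSeq : IsSevenRecurrent ellSeq :=
  ⟨by decide, by decide, fun _ => rfl⟩

def weightTail (x : ℕ → ℕ) (n : ℕ) : List ℕ :=
  weightSeq (x (n + 1)) (x (n + 1) - x n)

theorem weightTail_ellSeq_zero : weightTail ellSeq 0 = 6 :: List.replicate 6 1 :=
  weightSeq_succ_self (by norm_num)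

theorem weightTail_Qseq_zero : weightTail Qseq 0 = 7 :: List.replicate 7 1 :=
  weightSeq_succ_self (by norm_num)

namespace IsSevenRecurrent

variable {x : ℕ → ℕ}

theorem pos_and_lt_succ (hx : IsSevenRecurrent x) (n : ℕ) : 0 < x n ∧ x n < x (n + 1) := by
  induction n with
  | zero => exact ⟨hx.zero_pos, hx.zero_lt_one⟩
  | succ n ih =>
    show 0 < x (n + 1) ∧ x (n + 1) < x (n + 2)
    have := hx.recurrence n
    omega

theorem six_mul_lt (hx : IsSevenRecurrent x) (n : ℕ) : 6 * x (n + 1) < x (n + 2) := by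
  have := hx.pos_and_lt_succ n
  have := hx.recurrence n
  omega

theorem add_eq (hx : IsSevenRecurrent x) (n : ℕ) : x (n + 2) + x n = 7 * x (n + 1) := by
  have := hx.six_mul_lt n
  have := hx.recurrence n
  omega

theorem cast_rec (hx : IsSevenRecurrent x) (n : ℕ) :
    (x (n + 2) : ℤ) = 7 * x (n + 1) - x n := by
  have := hx.add_eq n
  omega

theorem cast_sub (hx : IsSevenRecurrent x) (n : ℕ) :
    ((x (n + 1) - x n : ℕ) : ℤ) = x (n + 1) - x n :=
  Nat.cast_sub (hx.pos_and_lt_succ n).2.le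

theorem weightSeq_add_two (hx : IsSevenRecurrent x) (n : ℕ) :
    weightSeq (x (n + 2)) (x (n + 1)) = List.replicate 6 (x (n + 1)) ++ weightTail x n := by
  obtain ⟨h0, h1⟩ := hx.pos_and_lt_succ n
  have := hx.add_eq n
  exact weightSeq_eq_replicate_append (by omega) (by omega)

theorem weightTail_succ (hx : IsSevenRecurrent x) (n : ℕ) :
    weightTail x (n + 1) =
      (x (n + 2) - x (n + 1)) :: (List.replicate 5 (x (n + 1)) ++ weightTail x n) := by
  obtain ⟨h0, h1⟩ := hx.pos_and_lt_succ n
  have := hx.six_mul_lt n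
  have := hx.add_eq n
  show weightSeq (x (n + 2)) (x (n + 2) - x (n + 1)) = _
  rw [weightSeq_eq_replicate_append (a := 1) (r := x (n + 1)) (by omega) (by omega),
    weightSeq_eq_replicate_append (a := 5) (r := x (n + 1) - x n) (by omega) (by omega)]
  rfl

end IsSevenRecurrent

/-- For `x = ellSeq`, `y = Qseq`: the dot product of `zM (n + 2)` and `W(b_(n + 2))` without
its first six terms. -/
def tailDot (x y : ℕ → ℕ) (n : ℕ) : ℕ :=
  listDot ((weightTail x n).map (6 * ·) ++ List.replicate 7 1) (weightTail y (n + 1))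

theorem tailDot_succ {x y : ℕ → ℕ} (hx : IsSevenRecurrent x) (hy : IsSevenRecurrent y)
    (n : ℕ) :
    tailDot x y (n + 1) = 6 * (x (n + 2) - x (n + 1)) * (y (n + 3) - y (n + 2)) +
      5 * (6 * x (n + 1) * y (n + 2)) + tailDot x y n := by
  rw [tailDot, hx.weightTail_succ, hy.weightTail_succ]
  simp only [List.map_cons, List.map_append, List.map_replicate, List.cons_append,
    List.append_assoc, listDot_cons]
  rw [listDot_append _ _ (by simp), listDot_replicate, tailDot]
  ring

theorem tailDot_ellSeq_Qseq (n : ℕ) :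
    (tailDot ellSeq Qseq n : ℤ) = (ellSeq (n + 2) - ellSeq (n + 1)) * Qseq (n + 3) -
      35 * ellSeq (n + 1) * Qseq (n + 2) - 1 := by
  have hℓ := isSevenRecurrent_ellSeq
  have hQ := isSevenRecurrent_Qseq
  induction n with
  | zero =>
    rw [tailDot, hQ.weightTail_succ, weightTail_ellSeq_zero, weightTail_Qseq_zero]
    rfl
  | succ n ih =>
    rw [tailDot_succ hℓ hQ, Nat.cast_add, ih]
    push_cast [hℓ.cast_sub, hQ.cast_sub]
    rw [hℓ.cast_rec (n + 1), hQ.cast_rec (n + 2)]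
    ring

theorem zM_one : zM 1 = List.replicate 7 6 ++ List.replicate 7 1 := by
  rw [zM, show ellSeq 1 = 7 from rfl, show ellSeq (1 - 1) = 1 from rfl, weightSeq_one,
    List.map_replicate]

theorem zM_add_two (n : ℕ) :
    zM (n + 2) = List.replicate 6 (6 * ellSeq (n + 1)) ++
      ((weightTail ellSeq n).map (6 * ·) ++ List.replicate 7 1) := by
  rw [zM, show n + 2 - 1 = n + 1 from rfl, isSevenRecurrent_ellSeq.weightSeq_add_two,
    List.map_append, List.map_replicate, List.append_assoc]

theorem zM_dot_weight (n : ℕ) (hn : 1 ≤ n) :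
    ((List.zipWith (· * ·) (zM n) (weightSeq (Qseq (n + 1)) (Qseq n))).sum : ℤ) =
      (ellSeq (n - 1) : ℤ) * (Qseq n : ℤ) +
        ((ellSeq n : ℤ) - (ellSeq (n - 1) : ℤ)) * (Qseq (n + 1) : ℤ) - 1 := by
  change (listDot (zM n) (weightSeq (Qseq (n + 1)) (Qseq n)) : ℤ) = _
  obtain _ | _ | n := n
  · omega
  · rw [zM_one, isSevenRecurrent_Qseq.weightSeq_add_two 0, weightTail_Qseq_zero]
    rfl
  · rw [zM_add_two, isSevenRecurrent_Qseq.weightSeq_add_two, listDot_append _ _ (by simp),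
      listDot_replicate, ← tailDot, Nat.cast_add, tailDot_ellSeq_Qseq]
    push_cast
    ring
end

section
/- For all n ≥ 1, ℓ_{n-1}·Q_n + t_n·Q_{n+1} - 1 = ℓ_n² + 41·ℓ_n·ℓ_{n-1} - 5·ℓ_{n-1}² + 6, where Q, ℓ, t are the standard sequences (Q_0=1, Q_1=8; ℓ_0=1, ℓ_1=7; both satisfy a_{n+2}=7a_{n+1}-a_n; t_n = ℓ_n - ℓ_{n-1}). -/
theorem heavy_area_identity (Q l : ℕ → ℤ)
    (hQ0 : Q 0 = 1) (hQ1 : Q 1 = 8) (hQrec : ∀ n, Q (n + 2) = 7 * Q (n + 1) - Q n)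
    (hl0 : l 0 = 1) (hl1 : l 1 = 7) (hlrec : ∀ n, l (n + 2) = 7 * l (n + 1) - l n) :
    ∀ n, 1 ≤ n →
      l (n - 1) * Q n + (l n - l (n - 1)) * Q (n + 1) - 1 =
        l n ^ 2 + 41 * l n * l (n - 1) - 5 * l (n - 1) ^ 2 + 6 := by
  have hQl : ∀ m, Q (m + 1) = l (m + 1) + l m := by
    intro m
    induction m using Nat.strong_induction_on with
    | _ m ih =>
      match m with
      | 0 => simp [hQ1, hl1, hl0]
      | 1 => rw [hQrec 0, hlrec 0]; simp [hQ0, hQ1, hl0, hl1]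
      | (k + 2) =>
        rw [hQrec (k + 1), hlrec (k + 1), ih (k + 1) (by omega), ih k (by omega)]
        linarith [hlrec k]
  have hcas : ∀ m, l (m + 1) ^ 2 - 7 * l (m + 1) * l m + l m ^ 2 = 1 := by
    intro m
    induction m with
    | zero => rw [hl1, hl0]; ring
    | succ k ih => rw [hlrec k]; nlinarith [ih]
  intro n hn
  obtain ⟨m, rfl⟩ : ∃ m, n = m + 1 := ⟨n - 1, by omega⟩
  simp only [Nat.add_sub_cancel]
  rw [hQl m, hQl (m + 1), hlrec m]
  nlinarith [hcas m]
end

section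
/- Let p, q be coprime positive integers with p/q > (7+3√5)/2 = τ⁴. For a positive integer with partition into ends: if a_1, a_2 are positive integers with a_1 + a_2 = p and p_i = ⌈a_i·q/p⌉ for i = 1,2, then p_1·(a_1-1) + p_2·(a_2-1) + 2·min(a_1·p_2, a_2·p_1) > q·(p-1), i.e. the writhe lower bound strictly exceeds q(p-1) when the partition has two parts. -/
lemma ceil_mul_bound (p q a : ℕ) (hq : 0 < q) (hcop : Nat.Coprime p q)
    (ha : 0 < a) (hap : a < p) :
    (a : ℤ) * q + 1 ≤ (p : ℤ) * ⌈((a * q : ℕ) : ℚ) / (p : ℚ)⌉ := by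
  have hp : 0 < p := lt_trans ha hap
  set c : ℤ := ⌈((a * q : ℕ) : ℚ) / (p : ℚ)⌉ with hc
  have hpQ : (0 : ℚ) < (p : ℚ) := by exact_mod_cast hp
  have hle : ((a * q : ℕ) : ℚ) / (p : ℚ) ≤ (c : ℚ) := Int.le_ceil _
  have hndvd : ¬ (p : ℤ) ∣ ((a : ℤ) * q) := by
    intro hdvd
    have hdvd' : p ∣ a * q := by exact_mod_cast hdvd
    have : p ∣ a := (Nat.Coprime.dvd_of_dvd_mul_right hcop hdvd')
    exact absurd (Nat.le_of_dvd ha this) (not_le.mpr hap)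
  have hlt : (a : ℤ) * q < p * c := by
    by_contra hcon
    push_neg at hcon
    have h1 : (c : ℚ) ≤ ((a * q : ℕ) : ℚ) / (p : ℚ) := by
      rw [le_div_iff₀ hpQ]
      have : ((p : ℤ) * c : ℚ) ≤ ((a : ℤ) * q : ℚ) := by exact_mod_cast hcon
      push_cast at this ⊢
      linarith
    have heq : ((a * q : ℕ) : ℚ) / (p : ℚ) = (c : ℚ) := le_antisymm hle h1
    have h2 : ((a * q : ℕ) : ℚ) = (c : ℚ) * (p : ℚ) := (div_eq_iff (ne_of_gt hpQ)).mp heq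
    have h3 : ((a : ℤ) * q) = c * p := by exact_mod_cast (by push_cast at h2 ⊢; linarith : ((a:ℚ) * q) = (c : ℚ) * p)
    exact hndvd ⟨c, by linarith⟩
  linarith

theorem writhe_bound_two_ends (p q : ℕ) (hp : 0 < p) (hq : 0 < q)
    (hcop : Nat.Coprime p q) (htau : (7 + 3 * Real.sqrt 5) / 2 < (p : ℝ) / (q : ℝ))
    (a₁ a₂ : ℕ) (ha₁ : 0 < a₁) (ha₂ : 0 < a₂) (hsum : a₁ + a₂ = p) :
    (((a₁ : ℤ) - 1) * ⌈((a₁ * q : ℕ) : ℚ) / (p : ℚ)⌉ +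
        ((a₂ : ℤ) - 1) * ⌈((a₂ * q : ℕ) : ℚ) / (p : ℚ)⌉ +
        2 * min ((a₁ : ℤ) * ⌈((a₂ * q : ℕ) : ℚ) / (p : ℚ)⌉)
          ((a₂ : ℤ) * ⌈((a₁ * q : ℕ) : ℚ) / (p : ℚ)⌉)) >
      (q : ℤ) * ((p : ℤ) - 1) := by
  have ha₁p : a₁ < p := by omega
  have ha₂p : a₂ < p := by omega
  have h1 := ceil_mul_bound p q a₁ hq hcop ha₁ ha₁p
  have h2 := ceil_mul_bound p q a₂ hq hcop ha₂ ha₂p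
  set c₁ : ℤ := ⌈((a₁ * q : ℕ) : ℚ) / (p : ℚ)⌉
  set c₂ : ℤ := ⌈((a₂ * q : ℕ) : ℚ) / (p : ℚ)⌉
  have hpZ : (0 : ℤ) < p := by exact_mod_cast hp
  have hqZ : (0 : ℤ) < q := by exact_mod_cast hq
  have ha₁Z : (1 : ℤ) ≤ a₁ := by exact_mod_cast ha₁
  have ha₂Z : (1 : ℤ) ≤ a₂ := by exact_mod_cast ha₂
  have hsZ : (a₁ : ℤ) + a₂ = p := by exact_mod_cast hsum
  rw [← hsZ] at h1 h2 ⊢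
  rcases le_total ((a₁ : ℤ) * c₂) ((a₂ : ℤ) * c₁) with hmin | hmin
  · rw [min_eq_left hmin]
    have key : ((a₁:ℤ)+a₂) * ((q : ℤ) * (((a₁:ℤ)+a₂) - 1)) <
        ((a₁:ℤ)+a₂) * (((a₁ : ℤ) - 1) * c₁ + ((a₂ : ℤ) - 1) * c₂ + 2 * ((a₁ : ℤ) * c₂)) := by
      nlinarith [mul_le_mul_of_nonneg_left h1 (by linarith : (0:ℤ) ≤ (a₁ : ℤ) - 1),
        mul_le_mul_of_nonneg_left h2 (by linarith : (0:ℤ) ≤ (a₂ : ℤ) - 1),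
        mul_le_mul_of_nonneg_left h2 (by linarith : (0:ℤ) ≤ (a₁ : ℤ))]
    exact lt_of_mul_lt_mul_left key (by linarith)
  · rw [min_eq_right hmin]
    have key : ((a₁:ℤ)+a₂) * ((q : ℤ) * (((a₁:ℤ)+a₂) - 1)) <
        ((a₁:ℤ)+a₂) * (((a₁ : ℤ) - 1) * c₁ + ((a₂ : ℤ) - 1) * c₂ + 2 * ((a₂ : ℤ) * c₁)) := by
      nlinarith [mul_le_mul_of_nonneg_left h1 (by linarith : (0:ℤ) ≤ (a₁ : ℤ) - 1),
        mul_le_mul_of_nonneg_left h2 (by linarith : (0:ℤ) ≤ (a₂ : ℤ) - 1),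
        mul_le_mul_of_nonneg_left h1 (by linarith : (0:ℤ) ≤ (a₂ : ℤ))]
    exact lt_of_mul_lt_mul_left key (by linarith)
end
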